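/- arXiv:1709.06695 — 4 statements merged into one kernel-verified Lean document; each statement's English description precedes it below -/
import Mathlib

section
/- Let f be continuously differentiable on the finite interval [a,b] with ∫_a^b f(x) dx = 0. Then ∫_a^b f'(x)^2 dx ≥ (π/(b-a))^2 · ∫_a^b f(x)^2 dx. -/
/-!
Reflect `f` evenly about `a`: on `[2a - b, b]` the function `x ↦ f (a + |x - a|)` takes equal
values at the two endpoints and has mean zero, its right derivative is `± f' (a + |x - a|)`, and
reflection doubles the integrals of `f ^ 2` and `f' ^ 2`. For a function `g` with
`g u = g w` on an interval of length `T = w - u`, integration by parts gives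
`‖ĝ' n‖ = (2π|n|/T) ‖ĝ n‖`, and `ĝ 0 = 0` when `g` has mean zero, so Parseval's identity yields
`(2π/T)² ∫ ‖g‖² ≤ ∫ ‖g'‖²`. With `T = 2(b - a)` this is the claim.
-/

open Real Complex MeasureTheory Set intervalIntegral

theorem ContinuousOn.memLp_restrict_of_isCompact {X E : Type*} [TopologicalSpace X]
    [MeasurableSpace X] [OpensMeasurableSpace X] [NormedAddCommGroup E]
    [SecondCountableTopologyEither X E] {μ : Measure X} [IsFiniteMeasureOnCompacts μ]
    {f : X → E} {K : Set X} (hf : ContinuousOn f K) (hK : IsCompact K) (hKm : MeasurableSet K)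
    (p : ENNReal) : MemLp f p (μ.restrict K) := by
  have : IsFiniteMeasure (μ.restrict K) := isFiniteMeasure_restrict.2 hK.measure_lt_top.ne
  obtain ⟨C, hC⟩ := hK.exists_bound_of_continuousOn hf
  exact MemLp.of_bound (hf.aestronglyMeasurable hKm) C (ae_restrict_of_forall_mem hKm hC)

theorem MeasureTheory.MemLp.ite_neg_one_smul {α E : Type*} [MeasurableSpace α]
    [NormedAddCommGroup E] [NormedSpace ℝ E] {μ : Measure α} {p : ENNReal} {F : α → E}
    (hF : MemLp F p μ) {P : α → Prop} [DecidablePred P] (hP : MeasurableSet {x | P x}) :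
    MemLp (fun x => (if P x then -1 else 1 : ℝ) • F x) p μ := by
  refine hF.of_le ((Measurable.ite hP measurable_const measurable_const).aestronglyMeasurable.smul
    hF.1) (ae_of_all _ fun x => ?_)
  split_ifs <;> simp

theorem norm_fourierCoeffOn_deriv_of_hasDeriv_right {u w : ℝ} (huw : u < w) {g g' : ℝ → ℂ}
    {n : ℤ} (hn : n ≠ 0) (hg : ContinuousOn g (Icc u w))
    (hgg' : ∀ x ∈ Ioo u w, HasDerivWithinAt g (g' x) (Ioi x) x)
    (hg' : IntervalIntegrable g' volume u w) (hper : g u = g w) :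
    ‖fourierCoeffOn huw g' n‖ = 2 * π * |(n : ℝ)| / (w - u) * ‖fourierCoeffOn huw g n‖ := by
  have huw' : 0 < w - u := sub_pos.2 huw
  rw [fourierCoeffOn_of_hasDeriv_right (f := g) huw hn (by rwa [uIcc_of_le huw.le])
    (by simpa [huw.le] using hgg') hg', hper, sub_self, mul_zero, zero_sub]
  have hlen : ‖(w : ℂ) - u‖ = w - u := by
    rw [← ofReal_sub, norm_real, norm_of_nonneg huw'.le]
  have hscalar : ‖(1 : ℂ) / (-2 * π * I * n)‖ = 1 / (2 * π * |(n : ℝ)|) := by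
    simp [abs_of_pos pi_pos]
  rw [norm_mul, hscalar, norm_neg, norm_mul, hlen]
  field_simp

theorem wirtinger_periodic_of_hasDeriv_right {u w : ℝ} (huw : u < w) {g g' : ℝ → ℂ}
    (hg : ContinuousOn g (Icc u w))
    (hgg' : ∀ x ∈ Ioo u w, HasDerivWithinAt g (g' x) (Ioi x) x)
    (hg' : MemLp g' 2 (volume.restrict (Ioc u w))) (hper : g u = g w)
    (hmean : ∫ x in u..w, g x = 0) :
    (2 * π / (w - u)) ^ 2 * ∫ x in u..w, ‖g x‖ ^ 2 ≤ ∫ x in u..w, ‖g' x‖ ^ 2 := by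
  have huw' : 0 < w - u := sub_pos.2 huw
  have hg2 : MemLp g 2 (volume.restrict (Ioc u w)) :=
    (hg.memLp_restrict_of_isCompact isCompact_Icc measurableSet_Icc 2).mono_measure
      (Measure.restrict_mono Ioc_subset_Icc_self le_rfl)
  have hg'int : IntervalIntegrable g' volume u w :=
    (intervalIntegrable_iff_integrableOn_Ioc_of_le huw.le).2 (hg'.integrable one_le_two)
  have hcoeff (n : ℤ) :
      (2 * π / (w - u)) ^ 2 * ‖fourierCoeffOn huw g n‖ ^ 2 ≤ ‖fourierCoeffOn huw g' n‖ ^ 2 := by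
    rcases eq_or_ne n 0 with rfl | hn
    · have h0 : fourierCoeffOn huw g 0 = 0 := by simp [fourierCoeffOn_eq_integral, hmean]
      rw [h0, norm_zero, zero_pow two_ne_zero, mul_zero]
      positivity
    rw [norm_fourierCoeffOn_deriv_of_hasDeriv_right huw hn hg hgg' hg'int hper, ← mul_pow]
    have hn1 : (1 : ℝ) ≤ |(n : ℝ)| := by exact_mod_cast Int.one_le_abs hn
    have hfreq : 2 * π / (w - u) ≤ 2 * π * |(n : ℝ)| / (w - u) :=
      div_le_div_of_nonneg_right (le_mul_of_one_le_right (by positivity) hn1) huw'.le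
    gcongr (?_ * _) ^ 2
  have hsum := hasSum_le hcoeff ((hasSum_sq_fourierCoeffOn huw hg2).mul_left _)
    (hasSum_sq_fourierCoeffOn huw hg')
  rw [smul_eq_mul, smul_eq_mul, mul_left_comm] at hsum
  exact le_of_mul_le_mul_left hsum (inv_pos.2 huw')

theorem mapsTo_add_abs_sub_Icc (a b : ℝ) :
    MapsTo (fun x => a + |x - a|) (Icc (2 * a - b) b) (Icc a b) := fun x hx => by
  have : |x - a| ≤ b - a := abs_le.2 ⟨by linarith [hx.1], by linarith [hx.2]⟩
  exact ⟨le_add_of_nonneg_right (abs_nonneg _), by linarith⟩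

theorem hasDerivWithinAt_add_abs_sub_Ioi (a x : ℝ) :
    HasDerivWithinAt (fun y => a + |y - a|) (if x < a then -1 else 1) (Ioi x) x := by
  split_ifs with hxa
  · simpa using (((hasDerivAt_abs_neg (sub_neg.2 hxa)).comp x
      ((hasDerivAt_id x).sub_const a)).const_add a).hasDerivWithinAt
  · refine (hasDerivWithinAt_id x (Ioi x)).congr (fun y hy => ?_) ?_
    · simp [abs_of_nonneg (by linarith [mem_Ioi.1 hy] : 0 ≤ y - a)]
    · simp [abs_of_nonneg (by linarith : 0 ≤ x - a)]

theorem integral_comp_add_abs_sub {E : Type*} [NormedAddCommGroup E] [NormedSpace ℝ E]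
    {a b : ℝ} (hab : a ≤ b) {φ : ℝ → E} (hφ : IntervalIntegrable φ volume a b) :
    ∫ x in (2 * a - b)..b, φ (a + |x - a|) = (2 : ℝ) • ∫ x in a..b, φ x := by
  have hleft : EqOn (fun x => φ (a + |x - a|)) (fun x => φ (2 * a - x)) (uIcc (2 * a - b) a) := by
    intro x hx
    rw [uIcc_of_le (by linarith)] at hx
    simp only [abs_of_nonpos (sub_nonpos.2 hx.2)]
    ring_nf
  have hright : EqOn (fun x => φ (a + |x - a|)) φ (uIcc a b) := by
    intro x hx
    rw [uIcc_of_le hab] at hx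
    simp only [abs_of_nonneg (sub_nonneg.2 hx.1), add_sub_cancel]
  have hφ' : IntervalIntegrable (fun x => φ (2 * a - x)) volume (2 * a - b) a := by
    simpa [two_mul] using (hφ.comp_sub_left (2 * a)).symm
  rw [← integral_add_adjacent_intervals (b := a)
      ((intervalIntegrable_congr (hleft.mono uIoc_subset_uIcc)).2 hφ')
      ((intervalIntegrable_congr (hright.mono uIoc_subset_uIcc)).2 hφ),
    integral_congr hleft, integral_congr hright, integral_comp_sub_left, two_smul]
  ring_nf

/-- Poincaré–Wirtinger inequality on `[a,b]`: if `f` is continuously differentiable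
on `[a,b]` with zero mean, then `∫ f'² ≥ (π/(b-a))² ∫ f²`. -/
theorem wirtinger_interval (a b : ℝ) (hab : a < b) (f f' : ℝ → ℝ)
    (hderiv : ∀ x ∈ Set.Icc a b, HasDerivAt f (f' x) x)
    (hcont : ContinuousOn f' (Set.Icc a b))
    (hmean : ∫ x in a..b, f x = 0) :
    ∫ x in a..b, (f' x) ^ 2 ≥ (π / (b - a)) ^ 2 * ∫ x in a..b, (f x) ^ 2 := by
  set r : ℝ → ℝ := fun x => a + |x - a| with hr
  have hr_maps : MapsTo r (Icc (2 * a - b) b) (Icc a b) := mapsTo_add_abs_sub_Icc a b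
  have hf : ContinuousOn f (Icc a b) := HasDerivAt.continuousOn hderiv
  have key := wirtinger_periodic_of_hasDeriv_right (by linarith : 2 * a - b < b)
    (g := fun x => (f (r x) : ℂ)) (g' := fun x => (if x < a then -1 else 1 : ℝ) • (f' (r x) : ℂ))
    ?cont ?deriv ?memLp ?per ?mean
  case cont => exact continuous_ofReal.comp_continuousOn (hf.comp (by fun_prop) hr_maps)
  case deriv =>
    intro x hx
    exact (hderiv (r x) (hr_maps (Ioo_subset_Icc_self hx))).ofReal_comp.scomp_hasDerivWithinAt x
      (hasDerivWithinAt_add_abs_sub_Ioi a x)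
  case memLp =>
    have hf'_memLp := (continuous_ofReal.comp_continuousOn (hcont.comp (by fun_prop) hr_maps))
      |>.memLp_restrict_of_isCompact (μ := volume) isCompact_Icc measurableSet_Icc 2
    exact (hf'_memLp.ite_neg_one_smul measurableSet_Iio).mono_measure
      (Measure.restrict_mono Ioc_subset_Icc_self le_rfl)
  case per => simp only [hr, show 2 * a - b - a = -(b - a) by ring, abs_neg]
  case mean =>
    rw [intervalIntegral.integral_ofReal, integral_comp_add_abs_sub hab.le
      (hf.intervalIntegrable_of_Icc hab.le), hmean, smul_zero, ofReal_zero]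
  have hfold_f : ∫ x in (2 * a - b)..b, f (r x) ^ 2 = 2 * ∫ x in a..b, f x ^ 2 :=
    integral_comp_add_abs_sub hab.le ((hf.pow 2).intervalIntegrable_of_Icc hab.le)
  have hfold_f' : ∫ x in (2 * a - b)..b, f' (r x) ^ 2 = 2 * ∫ x in a..b, f' x ^ 2 :=
    integral_comp_add_abs_sub hab.le ((hcont.pow 2).intervalIntegrable_of_Icc hab.le)
  have hnorm_f' (x : ℝ) :
      ‖(if x < a then -1 else 1 : ℝ) • (f' (r x) : ℂ)‖ ^ 2 = f' (r x) ^ 2 := by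
    split_ifs <;> simp
  have hperiod : 2 * π / (b - (2 * a - b)) = π / (b - a) := by
    rw [show b - (2 * a - b) = 2 * (b - a) by ring, mul_div_mul_left _ _ two_ne_zero]
  simp only [norm_real, norm_eq_abs, sq_abs, hnorm_f', hfold_f, hfold_f', hperiod] at key
  linarith
end

section
/- Let f be continuously differentiable on [0,1] with ∫_0^1 f(x) dx = 0. Then ∫_0^1 f'(x)^2 dx ≥ π^2 ∫_0^1 f(x)^2 dx. -/
/-!
If `u` vanishes at both ends of `[a, b]` and `w' = c² + w²`, the identity
`u'² - c² u² = (u' + w u)² - (w u²)'` integrates to `c² ∫ u² ≤ ∫ u'²`. The Riccati equation is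
solved by `w t = c tan (c (t - m))`, `m` the midpoint, which stays bounded on `[a, b]` as long as
`c (b - a) < π`; letting `c ↑ k := π / (b - a)` gives `k² ∫ u² ≤ ∫ u'²`.

If instead `f` has mean zero, its primitive `F` vanishes at both ends, so `k² ∫ F² ≤ ∫ f²`.
Integrating by parts, `∫ f² = -∫ F f'`, and Cauchy–Schwarz gives
`(∫ f²)² ≤ ∫ F² ∫ f'² ≤ k⁻² ∫ f² ∫ f'²`.
-/

open Real Set Filter Topology MeasureTheory intervalIntegral

section

variable {a b : ℝ}

theorem sq_intervalIntegral_mul_le {f g : ℝ → ℝ} (hab : a ≤ b)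
    (hf : IntervalIntegrable (fun x => f x ^ 2) volume a b)
    (hg : IntervalIntegrable (fun x => g x ^ 2) volume a b)
    (hfg : IntervalIntegrable (fun x => f x * g x) volume a b) :
    (∫ x in a..b, f x * g x) ^ 2 ≤ (∫ x in a..b, f x ^ 2) * ∫ x in a..b, g x ^ 2 := by
  have hquad : ∀ t : ℝ, 0 ≤ (∫ x in a..b, f x ^ 2) * (t * t)
      + 2 * (∫ x in a..b, f x * g x) * t + ∫ x in a..b, g x ^ 2 := by
    intro t
    have hexpand : ∫ x in a..b, (t * f x + g x) ^ 2 = (∫ x in a..b, f x ^ 2) * (t * t)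
        + 2 * (∫ x in a..b, f x * g x) * t + ∫ x in a..b, g x ^ 2 := by
      simp_rw [show ∀ x, (t * f x + g x) ^ 2 = t * t * f x ^ 2 + (2 * t * (f x * g x) + g x ^ 2)
        from fun x => by ring]
      rw [integral_add (hf.const_mul _) ((hfg.const_mul _).add hg),
        integral_add (hfg.const_mul _) hg, intervalIntegral.integral_const_mul,
        intervalIntegral.integral_const_mul]
      ring
    rw [← hexpand]
    exact integral_nonneg hab fun x _ => sq_nonneg _
  have hdiscrim := discrim_le_zero hquad
  rw [discrim] at hdiscrim
  nlinarith

theorem sq_mul_integral_sq_le_integral_deriv_sq_of_riccati {u u' w : ℝ → ℝ} {c : ℝ} (hab : a ≤ b)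
    (hu : ContinuousOn u (Icc a b)) (hu' : ContinuousOn u' (Icc a b))
    (hderiv : ∀ x ∈ Ioo a b, HasDerivAt u (u' x) x) (hw : ContinuousOn w (Icc a b))
    (hriccati : ∀ x ∈ Ioo a b, HasDerivAt w (c ^ 2 + w x ^ 2) x) (ha : u a = 0) (hb : u b = 0) :
    c ^ 2 * ∫ x in a..b, u x ^ 2 ≤ ∫ x in a..b, u' x ^ 2 := by
  set P' := fun x => (c ^ 2 + w x ^ 2) * u x ^ 2 + w x * (2 * u x * u' x)
  have hP' : IntervalIntegrable P' volume a b :=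
    ContinuousOn.intervalIntegrable_of_Icc hab (by fun_prop)
  have hboundary : ∫ x in a..b, P' x = 0 := by
    rw [integral_eq_sub_of_hasDerivAt_of_le hab (hw.mul (hu.pow 2))
      (fun x hx => ((hriccati x hx).mul ((hderiv x hx).pow 2)).congr_deriv
        (by simp only [Pi.pow_apply, Nat.cast_ofNat, Nat.add_one_sub_one, pow_one, P'])) hP']
    simp [ha, hb]
  have hnonneg : 0 ≤ ∫ x in a..b, (u' x ^ 2 - c ^ 2 * u x ^ 2) := by
    simp_rw [show ∀ x, u' x ^ 2 - c ^ 2 * u x ^ 2 = (u' x + w x * u x) ^ 2 - P' x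
      from fun x => by simp only [P']; ring]
    rw [integral_sub (ContinuousOn.intervalIntegrable_of_Icc hab (by fun_prop)) hP', hboundary,
      sub_zero]
    exact integral_nonneg hab fun _ _ => sq_nonneg _
  rwa [integral_sub (ContinuousOn.intervalIntegrable_of_Icc hab (by fun_prop))
    (ContinuousOn.intervalIntegrable_of_Icc hab (by fun_prop)), intervalIntegral.integral_const_mul,
    sub_nonneg] at hnonneg

theorem hasDerivAt_mul_tan_mul_sub {c m x : ℝ} (hx : cos (c * (x - m)) ≠ 0) :
    HasDerivAt (fun t => c * tan (c * (t - m))) (c ^ 2 + (c * tan (c * (x - m))) ^ 2) x := by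
  have hinner : HasDerivAt (fun t => c * (t - m)) c x := by
    simpa using ((hasDerivAt_id x).sub_const m).const_mul c
  refine (((hasDerivAt_tan hx).comp x hinner).const_mul c).congr_deriv ?_
  rw [tan_eq_sin_div_cos]
  field_simp
  linear_combination -c ^ 2 * sin_sq_add_cos_sq (c * (x - m))

theorem sq_mul_integral_sq_le_integral_deriv_sq_of_mul_lt_pi {u u' : ℝ → ℝ} {c : ℝ} (hab : a ≤ b)
    (hc : 0 ≤ c) (hcπ : c * (b - a) < π) (hu : ContinuousOn u (Icc a b))
    (hu' : ContinuousOn u' (Icc a b)) (hderiv : ∀ x ∈ Ioo a b, HasDerivAt u (u' x) x)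
    (ha : u a = 0) (hb : u b = 0) :
    c ^ 2 * ∫ x in a..b, u x ^ 2 ≤ ∫ x in a..b, u' x ^ 2 := by
  have hcos : ∀ x ∈ Icc a b, cos (c * (x - (a + b) / 2)) ≠ 0 := by
    intro x hx
    have hxa := mul_nonneg hc (sub_nonneg.2 hx.1)
    have hxb := mul_nonneg hc (sub_nonneg.2 hx.2)
    exact (cos_pos_of_mem_Ioo ⟨by nlinarith, by nlinarith⟩).ne'
  have hw := fun x hx => hasDerivAt_mul_tan_mul_sub (hcos x hx)
  exact sq_mul_integral_sq_le_integral_deriv_sq_of_riccati hab hu hu' hderiv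
    (fun x hx => (hw x hx).continuousAt.continuousWithinAt)
    (fun x hx => hw x (Ioo_subset_Icc_self hx)) ha hb

theorem sq_pi_div_mul_integral_sq_le_integral_deriv_sq_of_eq_zero {u u' : ℝ → ℝ} (hab : a < b)
    (hu : ContinuousOn u (Icc a b)) (hu' : ContinuousOn u' (Icc a b))
    (hderiv : ∀ x ∈ Ioo a b, HasDerivAt u (u' x) x) (ha : u a = 0) (hb : u b = 0) :
    (π / (b - a)) ^ 2 * ∫ x in a..b, u x ^ 2 ≤ ∫ x in a..b, u' x ^ 2 := by
  have hlim : Tendsto (fun c => c ^ 2 * ∫ x in a..b, u x ^ 2) (𝓝[<] (π / (b - a)))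
      (𝓝 ((π / (b - a)) ^ 2 * ∫ x in a..b, u x ^ 2)) :=
    ((continuous_pow 2).mul continuous_const).continuousWithinAt
  have hpos : 0 < π / (b - a) := div_pos pi_pos (sub_pos.2 hab)
  refine le_of_tendsto hlim (eventually_of_mem (Ioo_mem_nhdsLT hpos) fun c hc => ?_)
  exact sq_mul_integral_sq_le_integral_deriv_sq_of_mul_lt_pi hab.le hc.1.le
    ((lt_div_iff₀ (sub_pos.2 hab)).1 hc.2) hu hu' hderiv ha hb

theorem hasDerivAt_integral_of_continuousOn_Icc {f : ℝ → ℝ} (hf : ContinuousOn f (Icc a b))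
    {x : ℝ} (hx : x ∈ Ioo a b) : HasDerivAt (fun y => ∫ t in a..y, f t) (f x) x :=
  integral_hasDerivAt_right
    ((hf.mono (Icc_subset_Icc_right hx.2.le)).intervalIntegrable_of_Icc hx.1.le)
    ((hf.mono Ioo_subset_Icc_self).stronglyMeasurableAtFilter isOpen_Ioo x hx)
    (hf.continuousAt (Icc_mem_nhds hx.1 hx.2))

theorem sq_pi_div_mul_integral_sq_le_integral_deriv_sq_of_integral_eq_zero {f f' : ℝ → ℝ}
    (hab : a < b) (hf : ContinuousOn f (Icc a b)) (hf' : ContinuousOn f' (Icc a b))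
    (hderiv : ∀ x ∈ Ioo a b, HasDerivAt f (f' x) x) (hmean : ∫ x in a..b, f x = 0) :
    (π / (b - a)) ^ 2 * ∫ x in a..b, f x ^ 2 ≤ ∫ x in a..b, f' x ^ 2 := by
  set F := fun y => ∫ t in a..y, f t
  have hF : ContinuousOn F (Icc a b) := by
    simpa [hab.le] using continuousOn_primitive_interval (a := a) (b := b)
      (by simpa [hab.le] using hf.integrableOn_Icc)
  have hF' : ∀ x ∈ Ioo a b, HasDerivAt F (f x) x :=
    fun x hx => hasDerivAt_integral_of_continuousOn_Icc hf hx
  have hdirichlet : (π / (b - a)) ^ 2 * ∫ x in a..b, F x ^ 2 ≤ ∫ x in a..b, f x ^ 2 :=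
    sq_pi_div_mul_integral_sq_le_integral_deriv_sq_of_eq_zero hab hF hf hF' integral_same hmean
  have hparts : ∫ x in a..b, F x * f' x = -∫ x in a..b, f x ^ 2 := by
    rw [integral_mul_deriv_eq_deriv_mul_of_hasDerivAt (by simpa [hab.le] using hF)
      (by simpa [hab.le] using hf) (by simpa [hab.le] using hF') (by simpa [hab.le] using hderiv)
      (hf.intervalIntegrable_of_Icc hab.le) (hf'.intervalIntegrable_of_Icc hab.le)]
    simp [F, hmean, sq]
  have hcs := sq_intervalIntegral_mul_le (f := F) (g := f') hab.le
    (ContinuousOn.intervalIntegrable_of_Icc hab.le (by fun_prop))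
    (ContinuousOn.intervalIntegrable_of_Icc hab.le (by fun_prop))
    (ContinuousOn.intervalIntegrable_of_Icc hab.le (by fun_prop))
  rw [hparts, neg_sq] at hcs
  have hC : 0 ≤ ∫ x in a..b, f' x ^ 2 := integral_nonneg hab.le fun x _ => sq_nonneg _
  obtain hA | hA := (integral_nonneg hab.le fun x _ => sq_nonneg (f x)).eq_or_lt
  · rwa [← hA, mul_zero]
  · nlinarith [mul_le_mul_of_nonneg_right hdirichlet hC]

end

/-- Poincaré–Wirtinger inequality on `[0,1]`: if `f` is continuously differentiable
on `[0,1]` with zero mean, then `∫ f'² ≥ π² ∫ f²`. -/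
theorem wirtinger_unit_interval (f f' : ℝ → ℝ)
    (hderiv : ∀ x ∈ Set.Icc (0:ℝ) 1, HasDerivAt f (f' x) x)
    (hcont : ContinuousOn f' (Set.Icc (0:ℝ) 1))
    (hmean : ∫ x in (0:ℝ)..1, f x = 0) :
    ∫ x in (0:ℝ)..1, (f' x) ^ 2 ≥ π ^ 2 * ∫ x in (0:ℝ)..1, (f x) ^ 2 := by
  have hf : ContinuousOn f (Icc 0 1) := fun x hx => (hderiv x hx).continuousAt.continuousWithinAt
  simpa using sq_pi_div_mul_integral_sq_le_integral_deriv_sq_of_integral_eq_zero zero_lt_one hf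
    hcont (fun x hx => hderiv x (Ioo_subset_Icc_self hx)) hmean
end

section
/- For a nonempty subset u of {1,…,d}, the ANOVA component f_u of a function f : [0,1]^d → ℝ with continuous ∂^{1:d} f satisfies ∫_{[0,1]^{d−|u|}} ∂^u f(x) dx_{−u} = ∂^u f_u(x) for all x ∈ [0,1]^d. -/
open MeasureTheory Real Finset

noncomputable section

/-- The unit cube `[0,1]^d`. -/
def cube (d : ℕ) : Set (Fin d → ℝ) := Set.univ.pi fun _ => Set.Icc (0:ℝ) 1

/-- Partial derivative of `g` with respect to coordinate `j`. -/
def pderiv {d : ℕ} (j : Fin d) (g : (Fin d → ℝ) → ℝ) : (Fin d → ℝ) → ℝ :=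
  fun x => deriv (fun t => g (Function.update x j t)) (x j)

/-- Mixed partial derivative `∂^u g`, one derivative for each coordinate in `u`. -/
def mderiv {d : ℕ} (u : Finset (Fin d)) (g : (Fin d → ℝ) → ℝ) : (Fin d → ℝ) → ℝ :=
  u.toList.foldr pderiv g

/-- `margOut u g x = ∫ g dx_{-u}` : integral over the coordinates outside `u`. -/
def margOut {d : ℕ} (u : Finset (Fin d)) (g : (Fin d → ℝ) → ℝ) : (Fin d → ℝ) → ℝ :=
  fun x => ∫ z in cube d, g (fun j => if j ∈ u then x j else z j)

/-- All mixed partial derivatives of `f` exist and are continuous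
(the paper's condition that `∂^{1:d} f` is continuous). -/
def SmoothEnough {d : ℕ} (f : (Fin d → ℝ) → ℝ) : Prop :=
  (∀ (v : Finset (Fin d)) (j : Fin d) (x : Fin d → ℝ),
      DifferentiableAt ℝ (fun t => mderiv v f (Function.update x j t)) (x j)) ∧
  ∀ v : Finset (Fin d), Continuous (mderiv v f)

/-- Squared unanchored weighted Sobolev norm `‖f‖_γ²`. -/
def wnorm2 {d : ℕ} (γ : Finset (Fin d) → ℝ) (f : (Fin d → ℝ) → ℝ) : ℝ :=
  ∑ u : Finset (Fin d), (γ u)⁻¹ * ∫ x in cube d, (margOut u (mderiv u f) x) ^ 2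

/-- `F` is the ANOVA decomposition of `f`: `f = ∑_u F u`, each `F u` depends only on
the coordinates in `u`, and `∫_0^1 F u dx_j = 0` for every `j ∈ u`. -/
def IsANOVA {d : ℕ} (f : (Fin d → ℝ) → ℝ)
    (F : Finset (Fin d) → (Fin d → ℝ) → ℝ) : Prop :=
  (∀ x, f x = ∑ u : Finset (Fin d), F u x) ∧
  (∀ u : Finset (Fin d), ∀ x y : Fin d → ℝ, (∀ j ∈ u, x j = y j) → F u x = F u y) ∧
  (∀ u : Finset (Fin d), ∀ j ∈ u, ∀ x : Fin d → ℝ,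
      ∫ t in (0:ℝ)..1, F u (Function.update x j t) = 0)

/-- ANOVA variance component `σ_u² = ∫ f_u²`. -/
def sigma2 {d : ℕ} (F : Finset (Fin d) → (Fin d → ℝ) → ℝ) (u : Finset (Fin d)) : ℝ :=
  ∫ x in cube d, (F u x) ^ 2

/-- Mean `μ = ∫ f`. -/
def fmean {d : ℕ} (f : (Fin d → ℝ) → ℝ) : ℝ := ∫ x in cube d, f x

/-- Variance `σ²(f) = ∫ (f - μ)²`. -/
def fvar {d : ℕ} (f : (Fin d → ℝ) → ℝ) : ℝ := ∫ x in cube d, (f x - fmean f) ^ 2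

/-- The critical radius `ρ*(γ)`: the smallest radius of a `γ`-ball containing a
function of unit variance. -/
def rhoStar {d : ℕ} (γ : Finset (Fin d) → ℝ) : ℝ :=
  sInf {ρ : ℝ | 0 < ρ ∧ ∃ f : (Fin d → ℝ) → ℝ,
    SmoothEnough f ∧ wnorm2 γ f ≤ ρ ^ 2 ∧ fvar f = 1}

/-!
Since `f = ∑ v, f_v` and `∂^u` is additive, `∫ ∂^u f dx_{-u} = ∑ v, ∫ ∂^u f_v dx_{-u}`.
The term `v = u` is `∂^u f_u`, which does not depend on `x_{-u}`. If `u ⊄ v`, then `∂^u f_v = 0`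
because `f_v` is constant in some coordinate of `u`. If `u ⊊ v`, pick `j ∈ v \ u`: differentiating
under the integral sign, `∫_0^1 ∂^u f_v dx_j = ∂^u ∫_0^1 f_v dx_j = 0`, and Fubini kills the term.
-/

open Function intervalIntegral

theorem hasDerivAt_intervalIntegral_of_continuous {Ψ Ψ' : ℝ → ℝ → ℝ}
    (hΨ : Continuous (uncurry Ψ)) (hΨ' : Continuous (uncurry Ψ'))
    (hderiv : ∀ σ t, HasDerivAt (Ψ · t) (Ψ' σ t) σ) (σ₀ a b : ℝ) :
    HasDerivAt (fun σ => ∫ t in a..b, Ψ σ t) (∫ t in a..b, Ψ' σ₀ t) σ₀ := by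
  obtain ⟨C, hC⟩ := ((isCompact_closedBall σ₀ 1).prod isCompact_uIcc).exists_bound_of_continuousOn
    hΨ'.continuousOn
  refine (intervalIntegral.hasDerivAt_integral_of_dominated_loc_of_deriv_le (bound := fun _ => C)
    (Metric.ball_mem_nhds σ₀ one_pos)
    (.of_forall fun σ => (hΨ.comp (Continuous.prodMk_right σ)).aestronglyMeasurable)
    ((hΨ.comp (Continuous.prodMk_right σ₀)).intervalIntegrable a b)
    (hΨ'.comp (Continuous.prodMk_right σ₀)).aestronglyMeasurable
    (.of_forall fun t ht σ hσ =>
      hC (σ, t) ⟨Metric.ball_subset_closedBall hσ, Set.uIoc_subset_uIcc ht⟩)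
    intervalIntegrable_const (.of_forall fun t _ σ _ => hderiv σ t)).2

/-- Clairaut's theorem: differentiating `φ s = φ σ + ∫ r in σ..s, φ₁ r` under the integral sign
gives `φ₂ s = φ₂ σ + ∫ r in σ..s, φ₁₂ r`. -/
theorem hasDerivAt_of_mixed_partials {φ φ₁ φ₂ φ₁₂ : ℝ → ℝ → ℝ}
    (h₁ : ∀ σ τ, HasDerivAt (φ · τ) (φ₁ σ τ) σ) (h₂ : ∀ σ τ, HasDerivAt (φ σ ·) (φ₂ σ τ) τ)
    (h₁₂ : ∀ σ τ, HasDerivAt (φ₁ σ ·) (φ₁₂ σ τ) τ)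
    (hc₁ : Continuous (uncurry φ₁)) (hc₁₂ : Continuous (uncurry φ₁₂)) (σ τ : ℝ) :
    HasDerivAt (φ₂ · τ) (φ₁₂ σ τ) σ := by
  have hφ : ∀ s t, φ s t = φ σ t + ∫ r in σ..s, φ₁ r t := fun s t => by
    rw [integral_eq_sub_of_hasDerivAt (fun r _ => h₁ r t)
      ((hc₁.comp (Continuous.prodMk_left t)).intervalIntegrable _ _)]
    ring
  have hφ₂ : ∀ s, (φ₂ · τ) s = φ₂ σ τ + ∫ r in σ..s, φ₁₂ r τ := fun s => by
    have hrhs := (h₂ σ τ).fun_add (hasDerivAt_intervalIntegral_of_continuous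
      (Ψ := fun t r => φ₁ r t) (Ψ' := fun t r => φ₁₂ r t)
      (hc₁.comp continuous_swap) (hc₁₂.comp continuous_swap) (fun t r => h₁₂ r t) τ σ s)
    simp only [← hφ] at hrhs
    exact (h₂ s τ).unique hrhs
  have hcont : Continuous (φ₁₂ · τ) := hc₁₂.comp (Continuous.prodMk_left τ)
  rw [funext hφ₂]
  exact (integral_hasDerivAt_right (hcont.intervalIntegrable _ _)
    (hcont.stronglyMeasurableAtFilter _ _) hcont.continuousAt).const_add _

section PartialDerivatives

variable {d : ℕ}

def DifferentiableAlong (j : Fin d) (g : (Fin d → ℝ) → ℝ) : Prop :=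
  ∀ y : Fin d → ℝ, DifferentiableAt ℝ (fun t => g (update y j t)) (y j)

theorem DifferentiableAlong.hasDerivAt {j : Fin d} {g : (Fin d → ℝ) → ℝ}
    (hg : DifferentiableAlong j g) (y : Fin d → ℝ) (s : ℝ) :
    HasDerivAt (fun t => g (update y j t)) (pderiv j g (update y j s)) s := by
  simpa [pderiv] using (hg (update y j s)).hasDerivAt

theorem pderiv_comm {G : (Fin d → ℝ) → ℝ} {a j : Fin d} (haj : a ≠ j)
    (hGa : DifferentiableAlong a G) (hGj : DifferentiableAlong j G)
    (hGaj : DifferentiableAlong j (pderiv a G))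
    (hca : Continuous (pderiv a G)) (hcja : Continuous (pderiv j (pderiv a G))) :
    pderiv a (pderiv j G) = pderiv j (pderiv a G) := by
  funext x
  have hcomm : ∀ σ τ, update (update x j τ) a σ = update (update x a σ) j τ :=
    fun σ τ => (update_comm haj σ τ x).symm
  have he : Continuous fun p : ℝ × ℝ => update (update x j p.2) a p.1 :=
    ((continuous_const (y := x)).update j continuous_snd).update a continuous_fst
  have key := hasDerivAt_of_mixed_partials
    (φ := fun σ τ => G (update (update x j τ) a σ))
    (φ₂ := fun σ τ => pderiv j G (update (update x j τ) a σ))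
    (φ₁₂ := fun σ τ => pderiv j (pderiv a G) (update (update x j τ) a σ))
    (fun σ τ => hGa.hasDerivAt _ σ)
    (fun σ τ => by simpa only [hcomm] using hGj.hasDerivAt (update x a σ) τ)
    (fun σ τ => by simpa only [hcomm] using hGaj.hasDerivAt (update x a σ) τ)
    (hca.comp he) (hcja.comp he) (x a) (x j)
  simp only [update_eq_self] at key
  exact key.deriv

theorem pderiv_sum {ι : Type*} {t : Finset ι} {g : ι → (Fin d → ℝ) → ℝ} {j : Fin d}
    (hg : ∀ i ∈ t, DifferentiableAlong j (g i)) :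
    pderiv j (∑ i ∈ t, g i) = ∑ i ∈ t, pderiv j (g i) := by
  funext x
  simp only [pderiv, Finset.sum_apply]
  exact deriv_fun_sum fun i hi => hg i hi x

theorem pderiv_eq_zero_of_dependsOn {g : (Fin d → ℝ) → ℝ} {s : Set (Fin d)} (hg : DependsOn g s)
    {j : Fin d} (hj : j ∉ s) : pderiv j g = 0 := by
  funext x
  have hconst : (fun t => g (update x j t)) = fun _ => g x :=
    funext fun t => hg fun i hi => update_of_ne (ne_of_mem_of_not_mem hi hj) t x
  simp [pderiv, hconst]

theorem DependsOn.pderiv {g : (Fin d → ℝ) → ℝ} {s : Set (Fin d)} (hg : DependsOn g s)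
    (j : Fin d) : DependsOn (pderiv j g) s := by
  by_cases hj : j ∈ s
  · intro x y hxy
    have hline : (fun t => g (Function.update x j t)) = fun t => g (Function.update y j t) :=
      funext fun t => hg fun i hi => by
        rcases eq_or_ne i j with rfl | hij
        · simp
        · simp [hij, hxy i hi]
    simp only [_root_.pderiv, hline, hxy j hj]
  · rw [pderiv_eq_zero_of_dependsOn hg hj]
    exact fun _ _ _ => rfl

theorem DependsOn.mderiv {g : (Fin d → ℝ) → ℝ} {s : Set (Fin d)} (hg : DependsOn g s)
    (u : Finset (Fin d)) : DependsOn (mderiv u g) s := by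
  unfold _root_.mderiv
  induction u.toList with
  | nil => exact hg
  | cons j l ih => exact ih.pderiv j

end PartialDerivatives

section MixedDerivatives

variable {d : ℕ} {h : (Fin d → ℝ) → ℝ}

@[simp]
theorem mderiv_empty (g : (Fin d → ℝ) → ℝ) : mderiv ∅ g = g := by
  simp [mderiv]

theorem foldr_pderiv_eq_mderiv_of_forall_card_lt {n : ℕ}
    (hins : ∀ W : Finset (Fin d), W.card < n → ∀ x ∉ W,
      mderiv (insert x W) h = pderiv x (mderiv W h)) :
    ∀ l : List (Fin d), l.Nodup → l.length ≤ n → l.foldr pderiv h = mderiv l.toFinset h := by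
  intro l
  induction l with
  | nil => simp
  | cons a m ih =>
    intro hnd hlen
    have ham : a ∉ m.toFinset := by simpa using (List.nodup_cons.mp hnd).1
    have hcard : m.toFinset.card < n := by
      rw [List.toFinset_card_of_nodup hnd.of_cons]
      simpa using hlen
    rw [List.foldr_cons, ih hnd.of_cons (by simp at hlen; omega), List.toFinset_cons,
      hins _ hcard a ham]

theorem mderiv_eq_pderiv_of_toList_eq_cons {n : ℕ}
    (hins : ∀ W : Finset (Fin d), W.card < n → ∀ x ∉ W,
      mderiv (insert x W) h = pderiv x (mderiv W h))
    {s : Finset (Fin d)} {b : Fin d} {m : List (Fin d)} (hs : s.toList = b :: m)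
    (hcard : s.card ≤ n + 1) : mderiv s h = pderiv b (mderiv (s.erase b) h) := by
  have hnd : (b :: m).Nodup := hs ▸ s.nodup_toList
  have hm : m.toFinset = s.erase b := by
    rw [← s.toList_toFinset, hs, List.toFinset_cons, erase_insert]
    simpa using (List.nodup_cons.mp hnd).1
  have hlen : m.length ≤ n := by
    have := s.length_toList
    rw [hs] at this
    simp at this
    omega
  rw [mderiv, hs, List.foldr_cons,
    foldr_pderiv_eq_mderiv_of_forall_card_lt hins m hnd.of_cons hlen, hm]

/-- `mderiv` differentiates in the (arbitrary) order of `Finset.toList`; Clairaut's theorem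
makes the order irrelevant. -/
theorem mderiv_insert (hh : SmoothEnough h) {W : Finset (Fin d)} {x : Fin d} (hx : x ∉ W) :
    mderiv (insert x W) h = pderiv x (mderiv W h) := by
  suffices ∀ n, ∀ W : Finset (Fin d), W.card = n → ∀ x ∉ W,
      mderiv (insert x W) h = pderiv x (mderiv W h) from this _ W rfl x hx
  intro n
  induction n using Nat.strong_induction_on with
  | _ n ih =>
  intro W hW x hx
  obtain ⟨b, m, hs⟩ := List.exists_cons_of_ne_nil (by simp : (insert x W).toList ≠ [])
  have hstep := mderiv_eq_pderiv_of_toList_eq_cons (h := h) (n := n)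
    (fun V hV y hy => ih V.card hV V rfl y hy) hs (by rw [card_insert_of_notMem hx, hW])
  have hb : b ∈ insert x W := by
    rw [← mem_toList, hs]
    exact List.mem_cons_self
  rcases eq_or_ne b x with rfl | hbx
  · rwa [erase_insert hx] at hstep
  have hbW : b ∈ W := (mem_insert.mp hb).resolve_left hbx
  set G := mderiv (W.erase b) h
  have hW' : (W.erase b).card < n := hW ▸ card_erase_lt_of_mem hbW
  have h1 : mderiv W h = pderiv b G := by
    rw [← ih _ hW' _ rfl b (notMem_erase b W), insert_erase hbW]
  have h2 : mderiv (insert x (W.erase b)) h = pderiv x G :=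
    ih _ hW' _ rfl x fun h => hx (mem_of_mem_erase h)
  rw [erase_insert_of_ne hbx.symm, h2] at hstep
  rw [hstep, h1]
  exact (pderiv_comm hbx.symm (hh.1 _ x) (hh.1 _ b) (h2 ▸ hh.1 _ b) (h2 ▸ hh.2 _)
    (hstep ▸ hh.2 _)).symm

theorem foldr_pderiv_eq_mderiv (hh : SmoothEnough h) {l : List (Fin d)} (hl : l.Nodup) :
    l.foldr pderiv h = mderiv l.toFinset h :=
  foldr_pderiv_eq_mderiv_of_forall_card_lt (fun _ _ _ hx => mderiv_insert hh hx) l hl le_rfl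

theorem mderiv_sum {ι : Type*} {t : Finset ι} {g : ι → (Fin d → ℝ) → ℝ}
    (hg : ∀ i ∈ t, SmoothEnough (g i)) (u : Finset (Fin d)) :
    mderiv u (∑ i ∈ t, g i) = ∑ i ∈ t, mderiv u (g i) := by
  suffices ∀ l : List (Fin d), l.Nodup →
      l.foldr pderiv (∑ i ∈ t, g i) = ∑ i ∈ t, l.foldr pderiv (g i) from this _ u.nodup_toList
  intro l hl
  induction l with
  | nil => rfl
  | cons a l ih =>
    simp only [List.foldr_cons, ih hl.of_cons]
    refine pderiv_sum fun i hi => ?_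
    rw [foldr_pderiv_eq_mderiv (hg i hi) hl.of_cons]
    exact (hg i hi).1 _ a

theorem mderiv_eq_zero_of_not_subset (hh : SmoothEnough h) {v u : Finset (Fin d)}
    (hv : DependsOn h v) (hvu : ¬u ⊆ v) : mderiv u h = 0 := by
  obtain ⟨j, hju, hjv⟩ := not_subset.mp hvu
  rw [← insert_erase hju, mderiv_insert hh (notMem_erase j u)]
  exact pderiv_eq_zero_of_dependsOn (hv.mderiv _) hjv

end MixedDerivatives

section IntegralsAlongLines

variable {d : ℕ}

theorem intervalIntegral_pderiv_update_eq_zero {G : (Fin d → ℝ) → ℝ} {i j : Fin d} (hij : i ≠ j)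
    (hG : Continuous G) (hGi : DifferentiableAlong i G) (hcG : Continuous (pderiv i G)) {a b : ℝ}
    (h0 : ∀ y, ∫ t in a..b, G (update y j t) = 0) (y : Fin d → ℝ) :
    ∫ t in a..b, pderiv i G (update y j t) = 0 := by
  have he : Continuous fun p : ℝ × ℝ => update (update y j p.2) i p.1 :=
    ((continuous_const (y := y)).update j continuous_snd).update i continuous_fst
  have key := hasDerivAt_intervalIntegral_of_continuous
    (Ψ := fun σ t => G (update (update y j t) i σ))
    (Ψ' := fun σ t => pderiv i G (update (update y j t) i σ)) (hG.comp he) (hcG.comp he)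
    (fun σ t => hGi.hasDerivAt _ σ) (y i) a b
  have hzero : (fun σ => ∫ t in a..b, G (update (update y j t) i σ)) = fun _ => 0 :=
    funext fun σ => by simpa only [update_comm hij] using h0 (update y i σ)
  rw [hzero] at key
  have hself : ∀ t, update (update y j t) i (y i) = update y j t := fun t => by
    rw [update_eq_self_iff, update_of_ne hij]
  simpa only [hself] using ((hasDerivAt_const (y i) (0 : ℝ)).unique key).symm

theorem intervalIntegral_mderiv_update_eq_zero {g : (Fin d → ℝ) → ℝ} (hg : SmoothEnough g)
    {j : Fin d} {a b : ℝ} (h0 : ∀ y, ∫ t in a..b, g (update y j t) = 0) {u : Finset (Fin d)}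
    (hj : j ∉ u) (y : Fin d → ℝ) : ∫ t in a..b, mderiv u g (update y j t) = 0 := by
  induction u using Finset.induction generalizing y with
  | empty => simpa using h0 y
  | insert i u hi ih =>
    have hij : i ≠ j := fun h => hj (h ▸ mem_insert_self i u)
    rw [mderiv_insert hg hi]
    refine intervalIntegral_pderiv_update_eq_zero hij (hg.2 u) (hg.1 u i) ?_
      (ih fun h => hj (mem_insert_of_mem h)) y
    rw [← mderiv_insert hg hi]
    exact hg.2 _

end IntegralsAlongLines

section Cube

variable {d : ℕ}

theorem volume_cube : volume (cube d) = 1 := by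
  rw [cube, volume_pi_pi]
  simp

theorem setIntegral_cube_const (c : ℝ) : ∫ _ in cube d, c = c := by
  simp [measureReal_def, volume_cube]

theorem integrableOn_cube {G : (Fin d → ℝ) → ℝ} (hG : Continuous G) : IntegrableOn G (cube d) :=
  hG.continuousOn.integrableOn_compact (isCompact_univ_pi fun _ => isCompact_Icc)

/-- Fubini, integrating first over the `j`-th coordinate. -/
theorem setIntegral_cube_eq_zero {G : (Fin d → ℝ) → ℝ} (hG : Continuous G) {j : Fin d}
    (h0 : ∀ z, ∫ t in (0 : ℝ)..1, G (update z j t) = 0) : ∫ z in cube d, G z = 0 := by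
  obtain ⟨n, rfl⟩ : ∃ n, d = n + 1 := Nat.exists_eq_add_one.mpr j.pos
  set ν : Fin (n + 1) → Measure ℝ := fun _ => volume.restrict (Set.Icc 0 1)
  have hμ : volume.restrict (cube (n + 1)) = Measure.pi ν := by
    rw [cube, volume_pi, Measure.restrict_pi_pi]
  set e := MeasurableEquiv.piFinSuccAbove (fun _ : Fin (n + 1) => ℝ) j
  have hmp := (measurePreserving_piFinSuccAbove ν j).symm
  have hint : Integrable (G ∘ e.symm) ((ν j).prod (Measure.pi fun i => ν (j.succAbove i))) :=
    (hmp.integrable_comp_emb e.symm.measurableEmbedding).mpr (hμ ▸ integrableOn_cube hG)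
  have hline : ∀ w, ∫ t, G (e.symm (t, w)) ∂ν j = 0 := fun w => by
    simpa [e, ν, MeasurableEquiv.piFinSuccAbove_symm_apply, Fin.insertNthEquiv,
      integral_Icc_eq_integral_Ioc, ← intervalIntegral.integral_of_le]
      using h0 (Fin.insertNth j 0 w)
  rw [hμ, ← hmp.integral_comp']
  exact (integral_prod_symm _ hint).trans (by simp [hline])

end Cube

section Marginal

variable {d : ℕ} {u : Finset (Fin d)}

theorem margOut_eq_setIntegral_piecewise (g : (Fin d → ℝ) → ℝ) (x : Fin d → ℝ) :
    margOut u g x = ∫ z in cube d, g (u.piecewise x z) := rfl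

theorem continuous_piecewise_right (x : Fin d → ℝ) :
    Continuous fun z : Fin d → ℝ => u.piecewise x z :=
  continuous_pi fun i => by
    unfold Finset.piecewise
    split_ifs <;> fun_prop

theorem margOut_of_dependsOn {g : (Fin d → ℝ) → ℝ} (hg : DependsOn g u) (x : Fin d → ℝ) :
    margOut u g x = g x := by
  have hconst : ∀ z, g (u.piecewise x z) = g x :=
    fun z => hg fun i hi => u.piecewise_eq_of_mem _ _ hi
  simp only [margOut_eq_setIntegral_piecewise, hconst, setIntegral_cube_const]

theorem margOut_sum {ι : Type*} {t : Finset ι} {g : ι → (Fin d → ℝ) → ℝ}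
    (hg : ∀ i ∈ t, Continuous (g i)) (x : Fin d → ℝ) :
    margOut u (∑ i ∈ t, g i) x = ∑ i ∈ t, margOut u (g i) x := by
  simp only [margOut_eq_setIntegral_piecewise, Finset.sum_apply]
  exact integral_finsetSum t fun i hi =>
    integrableOn_cube ((hg i hi).comp (continuous_piecewise_right x))

theorem margOut_eq_zero {g : (Fin d → ℝ) → ℝ} (hg : Continuous g) {j : Fin d} (hj : j ∉ u)
    (h0 : ∀ y, ∫ t in (0 : ℝ)..1, g (update y j t) = 0) (x : Fin d → ℝ) : margOut u g x = 0 :=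
  setIntegral_cube_eq_zero (hg.comp (continuous_piecewise_right x)) (j := j) fun z => by
    have hline := h0 (u.piecewise x z)
    simp only [u.update_piecewise_of_notMem x z hj] at hline
    exact hline

end Marginal

namespace IsANOVA

variable {d : ℕ} {f : (Fin d → ℝ) → ℝ} {F : Finset (Fin d) → (Fin d → ℝ) → ℝ}

theorem dependsOn (hF : IsANOVA f F) (u : Finset (Fin d)) : DependsOn (F u) u :=
  fun x y => hF.2.1 u x y

theorem margOut_mderiv_eq_zero (hF : IsANOVA f F) (hFsm : ∀ v, SmoothEnough (F v))
    {u v : Finset (Fin d)} (hvu : v ≠ u) (x : Fin d → ℝ) : margOut u (mderiv u (F v)) x = 0 := by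
  by_cases huv : u ⊆ v
  · obtain ⟨j, hjv, hju⟩ := exists_of_ssubset (ssubset_of_subset_of_ne huv hvu.symm)
    exact margOut_eq_zero ((hFsm v).2 u) hju
      (intervalIntegral_mderiv_update_eq_zero (hFsm v) (hF.2.2 v j hjv) hju) x
  · rw [mderiv_eq_zero_of_not_subset (hFsm v) (hF.dependsOn v) huv]
    simp [margOut]

end IsANOVA

theorem marginal_of_mixed_deriv_general (d : ℕ) (f : (Fin d → ℝ) → ℝ)
    (F : Finset (Fin d) → (Fin d → ℝ) → ℝ) (hF : IsANOVA f F)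
    (hFsm : ∀ v, SmoothEnough (F v))
    (u : Finset (Fin d)) :
    ∀ x : Fin d → ℝ, margOut u (mderiv u f) x = mderiv u (F u) x := by
  intro x
  have hf : f = ∑ v, F v := funext fun y => by rw [hF.1 y, Finset.sum_apply]
  rw [hf, mderiv_sum (fun v _ => hFsm v), margOut_sum (fun v _ => (hFsm v).2 u),
    Finset.sum_eq_single u (fun v _ hvu => hF.margOut_mderiv_eq_zero hFsm hvu x) (by simp)]
  exact margOut_of_dependsOn ((hF.dependsOn u).mderiv u) x

/-- For a nonempty subset `u`, integrating the mixed partial `∂^u f` over the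
coordinates outside `u` yields `∂^u f_u`, where `f_u` is the `u`-th ANOVA component. -/
theorem marginal_of_mixed_deriv (d : ℕ) (f : (Fin d → ℝ) → ℝ) (hsm : SmoothEnough f)
    (F : Finset (Fin d) → (Fin d → ℝ) → ℝ) (hF : IsANOVA f F)
    (hFsm : ∀ v, SmoothEnough (F v))
    (u : Finset (Fin d)) (hu : u ≠ ∅) :
    ∀ x : Fin d → ℝ, margOut u (mderiv u f) x = mderiv u (F u) x :=
  marginal_of_mixed_deriv_general d f F hF hFsm u
end
end

section
/- Fix η > 0 and λ ∈ (0,1). There exists ε₀ > 0 such that for all ε ∈ (0, ε₀), every positive integer s with (s!)^{-η} ≥ π^{2(s−1)} ε satisfies s · log s ≤ log(1/ε)/(λη). Consequently s_S(ε) = max{ s ≥ 1 : (s!)^{-η} ≥ π^{2(s−1)} ε } is O( log(1/ε) / log(log(1/ε)) ) as ε → 0. -/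
open Real

lemma pow_le_exp_mul_factorial (n : ℕ) : (n:ℝ)^n ≤ Real.exp n * n.factorial := by
  induction n with
  | zero => simp
  | succ n ih =>
    have hstep : ((n:ℝ)+1)^n ≤ Real.exp 1 * (n:ℝ)^n := by
      rcases Nat.eq_zero_or_pos n with h|h
      · subst h
        have := Real.add_one_le_exp (1:ℝ)
        simp only [pow_zero]
        linarith
      · have hn : (0:ℝ) < n := by exact_mod_cast h
        have h1 : (n:ℝ)+1 = n * (1 + 1/n) := by field_simp
        rw [h1, mul_pow]
        have h2 : (1 + 1/(n:ℝ))^n ≤ Real.exp 1 := by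
          calc (1 + 1/(n:ℝ))^n ≤ (Real.exp (1/n))^n := by
                apply pow_le_pow_left₀ (by positivity)
                linarith [Real.add_one_le_exp (1/(n:ℝ))]
            _ = Real.exp 1 := by
                rw [← Real.exp_nat_mul]; congr 1; field_simp
        calc (n:ℝ)^n * (1+1/n)^n ≤ (n:ℝ)^n * Real.exp 1 := by
              apply mul_le_mul_of_nonneg_left h2 (by positivity)
          _ = Real.exp 1 * (n:ℝ)^n := mul_comm _ _
    have hfact : (0:ℝ) ≤ (n.factorial : ℝ) := by positivity
    calc ((n+1:ℕ):ℝ)^(n+1) = ((n:ℝ)+1) * ((n:ℝ)+1)^n := by push_cast; ring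
      _ ≤ ((n:ℝ)+1) * (Real.exp 1 * (n:ℝ)^n) := by
          apply mul_le_mul_of_nonneg_left hstep (by positivity)
      _ ≤ ((n:ℝ)+1) * (Real.exp 1 * (Real.exp n * n.factorial)) := by
          apply mul_le_mul_of_nonneg_left _ (by positivity)
          exact mul_le_mul_of_nonneg_left ih (by positivity)
      _ = Real.exp ((n:ℝ)+1) * (((n:ℝ)+1) * n.factorial) := by
          rw [Real.exp_add]; ring
      _ = Real.exp ((n+1:ℕ):ℝ) * ((n+1:ℕ).factorial : ℝ) := by
          push_cast [Nat.factorial_succ]; ring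

lemma log_factorial_ge (n : ℕ) :
    (n:ℝ) * Real.log n - n ≤ Real.log (n.factorial : ℝ) := by
  rcases Nat.eq_zero_or_pos n with h|h
  · subst h; simp
  have hn : (0:ℝ) < n := by exact_mod_cast h
  have hf : (0:ℝ) < (n.factorial : ℝ) := by exact_mod_cast n.factorial_pos
  have := Real.log_le_log (by positivity) (pow_le_exp_mul_factorial n)
  rw [Real.log_pow, Real.log_mul (Real.exp_ne_zero _) (ne_of_gt hf), Real.log_exp] at this
  linarith

/-- Superposition-dimension rate: for `η > 0` and `λ ∈ (0,1)`, for all sufficiently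
small `ε`, every positive integer `s` with `(s!)^{-η} ≥ π^{2(s-1)} ε` satisfies
`s log s ≤ log(1/ε)/(λη)`; consequently the superposition dimension bound
`s_S(ε) = max{s ≥ 1 : (s!)^{-η} ≥ π^{2(s-1)} ε}` is
`O(log(1/ε)/log(log(1/ε)))` as `ε → 0`. -/
theorem superposition_dimension_rate (η lam : ℝ) (hη : 0 < η)
    (hlam : lam ∈ Set.Ioo (0:ℝ) 1) :
    (∃ ε₀ > (0:ℝ), ∀ ε ∈ Set.Ioo (0:ℝ) ε₀, ∀ s : ℕ, 1 ≤ s →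
      (s.factorial : ℝ) ^ (-η) ≥ π ^ (2 * (s - 1)) * ε →
      (s : ℝ) * Real.log s ≤ Real.log (1/ε) / (lam * η)) ∧
    (∃ C > (0:ℝ), ∃ ε₁ > (0:ℝ), ∀ ε ∈ Set.Ioo (0:ℝ) ε₁, ∀ s : ℕ, 1 ≤ s →
      (s.factorial : ℝ) ^ (-η) ≥ π ^ (2 * (s - 1)) * ε →
      (s : ℝ) ≤ C * Real.log (1/ε) / Real.log (Real.log (1/ε))) := by
  obtain ⟨hlam0, hlam1⟩ := hlam
  set μ : ℝ := lam * η with hμdef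
  have hμ : 0 < μ := mul_pos hlam0 hη
  set M : ℝ := Real.exp (1/(1-lam)) with hMdef
  have hM1 : 1 ≤ M := Real.one_le_exp (le_of_lt (div_pos one_pos (by linarith)))
  have hMlogM : 0 ≤ M * Real.log M := by
    have : 0 ≤ Real.log M := Real.log_nonneg hM1
    positivity
  set ε₀ : ℝ := Real.exp (-(μ * (M * Real.log M))) with hε₀def
  have hε₀pos : 0 < ε₀ := Real.exp_pos _
  -- key claim
  have key : ∀ ε ∈ Set.Ioo (0:ℝ) ε₀, ∀ s : ℕ, 1 ≤ s →
      (s.factorial : ℝ) ^ (-η) ≥ π ^ (2 * (s - 1)) * ε →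
      (s : ℝ) * Real.log s ≤ Real.log (1/ε) / μ := by
    rintro ε ⟨hε0, hεε₀⟩ s hs hcond
    have hs1 : (1:ℝ) ≤ (s:ℝ) := by exact_mod_cast hs
    have hfpos : (0:ℝ) < (s.factorial : ℝ) := by exact_mod_cast s.factorial_pos
    have hπ1 : (1:ℝ) ≤ π ^ (2 * (s - 1)) :=
      one_le_pow₀ (by linarith [Real.pi_gt_three])
    have hεle : ε ≤ (s.factorial : ℝ) ^ (-η) := by
      calc ε = 1 * ε := (one_mul ε).symm
        _ ≤ π ^ (2 * (s - 1)) * ε := by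
            apply mul_le_mul_of_nonneg_right hπ1 (le_of_lt hε0)
        _ ≤ (s.factorial : ℝ) ^ (-η) := hcond
    have hlog1 : Real.log ε ≤ -η * Real.log (s.factorial : ℝ) := by
      have := Real.log_le_log hε0 hεle
      rwa [Real.log_rpow hfpos] at this
    have ht : Real.log (1/ε) = -Real.log ε := by
      rw [one_div, Real.log_inv]
    have hηlog : η * Real.log (s.factorial : ℝ) ≤ Real.log (1/ε) := by
      rw [ht]; linarith
    -- also log(1/ε) > μ * (M log M)
    have htlarge : μ * (M * Real.log M) < Real.log (1/ε) := by
      have := Real.log_lt_log hε0 hεε₀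
      rw [Real.log_exp] at this
      rw [ht]; linarith
    rw [le_div_iff₀ hμ]
    rcases le_or_gt (s:ℝ) M with hsM | hMs
    · -- small s
      have hlogs : Real.log s ≤ Real.log M := Real.log_le_log (by linarith) hsM
      have h0 : 0 ≤ Real.log (s:ℝ) := Real.log_nonneg hs1
      have : (s:ℝ) * Real.log s ≤ M * Real.log M :=
        mul_le_mul hsM hlogs h0 (by linarith)
      nlinarith
    · -- large s
      have hlogs : 1/(1-lam) ≤ Real.log s := by
        rw [← Real.log_exp (1/(1-lam))]
        exact Real.log_le_log (Real.exp_pos _) (le_of_lt hMs)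
      have h1lam : 0 < 1 - lam := by linarith
      have hkey : lam * Real.log s ≤ Real.log s - 1 := by
        have : 1 ≤ (1-lam) * Real.log s := by
          rw [div_le_iff₀ h1lam] at hlogs; linarith
        nlinarith
      have hsl : (s:ℝ) * Real.log s * lam ≤ (s:ℝ) * Real.log s - s := by
        have h0s : (0:ℝ) ≤ s := by linarith
        nlinarith
      have hlf := log_factorial_ge s
      calc (s:ℝ) * Real.log s * μ = η * ((s:ℝ) * Real.log s * lam) := by
            rw [hμdef]; ring
        _ ≤ η * ((s:ℝ) * Real.log s - s) := by
            exact mul_le_mul_of_nonneg_left hsl (le_of_lt hη)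
        _ ≤ η * Real.log (s.factorial : ℝ) := by
            exact mul_le_mul_of_nonneg_left hlf (le_of_lt hη)
        _ ≤ Real.log (1/ε) := hηlog
  constructor
  · exact ⟨ε₀, hε₀pos, key⟩
  · have hC0 : (0:ℝ) < 2/μ + 2 := by
      have : 0 < 2/μ := div_pos two_pos hμ
      linarith
    refine ⟨2/μ + 2, hC0, min ε₀ (Real.exp (-2)), lt_min hε₀pos (Real.exp_pos _), ?_⟩
    rintro ε ⟨hε0, hεε₁⟩ s hs hcond
    have hεε₀ : ε < ε₀ := lt_of_lt_of_le hεε₁ (min_le_left _ _)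
    have hεe2 : ε < Real.exp (-2) := lt_of_lt_of_le hεε₁ (min_le_right _ _)
    set t : ℝ := Real.log (1/ε) with htdef
    have ht2 : 2 < t := by
      have h1 := Real.log_lt_log hε0 hεe2
      rw [Real.log_exp] at h1
      have h' : t = -Real.log ε := by rw [htdef, one_div, Real.log_inv]
      linarith
    have ht0 : 0 < t := by linarith
    have hlogt : 0 < Real.log t := Real.log_pos (by linarith)
    have hst : (s:ℝ) * Real.log s ≤ t / μ := key ε ⟨hε0, hεε₀⟩ s hs hcond
    have hs1 : (1:ℝ) ≤ (s:ℝ) := by exact_mod_cast hs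
    have hC2 : (2:ℝ) ≤ 2/μ + 2 := by
      have : 0 < 2/μ := div_pos two_pos hμ
      linarith
    rw [le_div_iff₀ hlogt]
    rcases le_or_gt (s:ℝ) (Real.sqrt t) with hsq | hsq
    · -- s ≤ √t
      have hsqt0 : 0 < Real.sqrt t := Real.sqrt_pos.mpr ht0
      have hss : Real.sqrt t * Real.sqrt t = t := Real.mul_self_sqrt (le_of_lt ht0)
      have hlsq : Real.log (Real.sqrt t) = Real.log t / 2 := Real.log_sqrt (le_of_lt ht0)
      have hlt : Real.log t ≤ 2 * Real.sqrt t := by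
        have h2 : Real.log (Real.sqrt t) ≤ Real.sqrt t - 1 :=
          Real.log_le_sub_one_of_pos hsqt0
        rw [hlsq] at h2; linarith
      have step1 : (s:ℝ) * Real.log t ≤ Real.sqrt t * Real.log t :=
        mul_le_mul_of_nonneg_right hsq (le_of_lt hlogt)
      have step2 : Real.sqrt t * Real.log t ≤ Real.sqrt t * (2 * Real.sqrt t) :=
        mul_le_mul_of_nonneg_left hlt (le_of_lt hsqt0)
      have step3 : Real.sqrt t * (2 * Real.sqrt t) = 2 * t := by
        rw [mul_comm (2:ℝ) (Real.sqrt t), ← mul_assoc, hss]; ring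
      have step4 : 2 * t ≤ (2/μ + 2) * t :=
        mul_le_mul_of_nonneg_right hC2 (le_of_lt ht0)
      linarith
    · -- √t < s
      have hlogsqrt : Real.log t / 2 ≤ Real.log s := by
        have h1 := Real.log_le_log (Real.sqrt_pos.mpr ht0) (le_of_lt hsq)
        rwa [Real.log_sqrt (le_of_lt ht0)] at h1
      have h0s : (0:ℝ) ≤ (s:ℝ) := by linarith
      have h1 : (s:ℝ) * (Real.log t / 2) ≤ (s:ℝ) * Real.log s :=
        mul_le_mul_of_nonneg_left hlogsqrt h0s
      have h2 : 2 * (t/μ) = (2/μ) * t := by field_simp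
      have h3 : (2/μ) * t ≤ (2/μ + 2) * t := by
        apply mul_le_mul_of_nonneg_right _ (le_of_lt ht0)
        linarith
      linarith
end
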